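/- In a 3-connected graph G, if U is a set of vertices and some vertex u ∈ U has at least 3 neighbors in U, then G contains a K_4 minor each of whose branch sets meets U. -/

import Mathlib

open SimpleGraph

/-- `B` is a system of branch sets witnessing a `K_n` minor in `G`:
nonempty, connected, pairwise disjoint sets with an edge between any two of them. -/
def IsCompleteMinorWitness {V : Type*} (G : SimpleGraph V) (n : ℕ)
    (B : Fin n → Set V) : Prop :=
  (∀ i, (B i).Nonempty) ∧ (∀ i, (G.induce (B i)).Connected) ∧
  (∀ i j, i ≠ j → Disjoint (B i) (B j)) ∧
  (∀ i j, i ≠ j → ∃ u ∈ B i, ∃ v ∈ B j, G.Adj u v)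

/-- `G` contains a complete minor `K_n`. -/
def HasCompleteMinor {V : Type*} (G : SimpleGraph V) (n : ℕ) : Prop :=
  ∃ B : Fin n → Set V, IsCompleteMinorWitness G n B

/-- `A`, `B` are systems of branch sets witnessing a complete bipartite `K_{m,n}`
minor in `G`. -/
def IsBipartiteMinorWitness {V : Type*} (G : SimpleGraph V) (m n : ℕ)
    (A : Fin m → Set V) (B : Fin n → Set V) : Prop :=
  (∀ i, (A i).Nonempty) ∧ (∀ j, (B j).Nonempty) ∧
  (∀ i, (G.induce (A i)).Connected) ∧ (∀ j, (G.induce (B j)).Connected) ∧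
  (∀ i j, i ≠ j → Disjoint (A i) (A j)) ∧
  (∀ i j, i ≠ j → Disjoint (B i) (B j)) ∧
  (∀ i j, Disjoint (A i) (B j)) ∧
  (∀ i j, ∃ u ∈ A i, ∃ v ∈ B j, G.Adj u v)

/-- `G` contains a complete bipartite minor `K_{m,n}`. -/
def HasBipartiteMinor {V : Type*} (G : SimpleGraph V) (m n : ℕ) : Prop :=
  ∃ (A : Fin m → Set V) (B : Fin n → Set V), IsBipartiteMinorWitness G m n A B

/-- Wagner characterization: a graph is planar iff it has no `K_5` and no `K_{3,3}` minor. -/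
def IsPlanar {V : Type*} (G : SimpleGraph V) : Prop :=
  ¬ HasCompleteMinor G 5 ∧ ¬ HasBipartiteMinor G 3 3

/-- Minor characterization of outerplanarity: no `K_4` and no `K_{2,3}` minor. -/
def IsOuterplanar {V : Type*} (G : SimpleGraph V) : Prop :=
  ¬ HasCompleteMinor G 4 ∧ ¬ HasBipartiteMinor G 2 3


/-- `G` remains connected after deleting any set of at most 2 vertices. -/
def ThreeConnected {V : Type*} (G : SimpleGraph V) : Prop :=
  ∀ S : Set V, S.ncard ≤ 2 → (G.induce Sᶜ).Connected

/-!
Let `a, b, c` be neighbours of `u` in `U`. As `G - {u, a}` is connected, it contains a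
`b`–`c` path `Q`. The component `A` of `a` in `G - (Q ∪ {u})` attaches to `Q` in at least two
vertices, since otherwise `u` and a single vertex of `Q` would separate it from the rest of `Q`.
Cutting `Q` at an edge between two attachments, the sets `{u}`, `A` and the two halves of `Q`
are the branch sets of a `K_4` minor, containing `u`, `a`, `b` and `c` respectively.
-/

namespace SimpleGraph

variable {V : Type*} {G : SimpleGraph V}

lemma exists_isPath_of_induce_connected {S : Set V} (hS : (G.induce S).Connected) {x y : V}
    (hx : x ∈ S) (hy : y ∈ S) : ∃ p : G.Walk x y, p.IsPath ∧ ∀ v ∈ p.support, v ∈ S := by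
  obtain ⟨p, hp⟩ := hS.exists_isPath ⟨x, hx⟩ ⟨y, hy⟩
  refine ⟨p.map (Embedding.induce S).toHom, hp.map (Embedding.induce (G := G) S).injective, ?_⟩
  intro v hv
  obtain ⟨w, -, rfl⟩ := List.mem_map.mp (p.support_map _ ▸ hv)
  exact w.2

lemma induce_singleton_connected (v : V) : (G.induce {v}).Connected := by
  rw [induce_singleton_eq_top]
  exact connected_top

lemma compl_subset_of_induce_compl_connected {S A : Set V} (hS : (G.induce Sᶜ).Connected)
    {a : V} (ha : a ∈ A) (haS : a ∉ S) (hA : ∀ x ∈ A, ∀ y, G.Adj x y → y ∈ A ∨ y ∈ S) :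
    Sᶜ ⊆ A := by
  intro d hd
  by_contra hdA
  obtain ⟨p, -, hpS⟩ := exists_isPath_of_induce_connected hS haS hd
  obtain ⟨e, he, heA, heA'⟩ := p.exists_boundary_dart A ha hdA
  exact hpS _ (p.dart_snd_mem_support_of_mem_darts he) ((hA _ heA _ e.adj).resolve_left heA')

/-- The vertex set of the component of `a` in `G - X` (empty when `a ∈ X`). -/
def componentAvoiding (G : SimpleGraph V) (X : Set V) (a : V) : Set V :=
  {x | ∃ p : G.Walk a x, ∀ v ∈ p.support, v ∉ X}

section componentAvoiding

variable {X : Set V} {a x y : V}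

lemma mem_componentAvoiding_self (ha : a ∉ X) : a ∈ G.componentAvoiding X a :=
  ⟨Walk.nil, by simpa using ha⟩

lemma disjoint_componentAvoiding : Disjoint (G.componentAvoiding X a) X :=
  Set.disjoint_left.mpr fun _ ⟨p, hp⟩ => hp _ p.end_mem_support

lemma mem_componentAvoiding_or_mem_of_adj (hx : x ∈ G.componentAvoiding X a) (h : G.Adj x y) :
    y ∈ G.componentAvoiding X a ∨ y ∈ X := by
  refine or_iff_not_imp_right.mpr fun hy => ?_
  obtain ⟨p, hp⟩ := hx
  refine ⟨p.concat h, fun v hv => ?_⟩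
  rw [Walk.support_concat, List.mem_append, List.mem_singleton] at hv
  rcases hv with hv | rfl
  exacts [hp v hv, hy]

lemma induce_componentAvoiding_connected (ha : a ∉ X) :
    (G.induce (G.componentAvoiding X a)).Connected := by
  classical
  refine induce_connected_of_patches a (mem_componentAvoiding_self ha) fun {x} ⟨p, hp⟩ => ?_
  refine ⟨{v | v ∈ p.support}, fun v hv => ?_, p.start_mem_support, p.end_mem_support,
    p.connected_induce_support.preconnected _ _⟩
  exact ⟨p.takeUntil v hv, fun w hw => hp w (p.support_takeUntil_subset_support hv hw)⟩

end componentAvoiding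

end SimpleGraph

namespace SimpleGraph.Walk

variable {V : Type*} {G : SimpleGraph V}

lemma exists_eq_append_cons_separating {b c x y : V} (p : G.Walk b c) (hx : x ∈ p.support)
    (hy : y ∈ p.support) (hxy : x ≠ y) :
    ∃ (s t : V) (p₁ : G.Walk b s) (h : G.Adj s t) (p₂ : G.Walk t c),
      p = p₁.append (cons h p₂) ∧
        (x ∈ p₁.support ∧ y ∈ p₂.support ∨ y ∈ p₁.support ∧ x ∈ p₂.support) := by
  induction p with
  | nil =>
    simp only [support_nil, List.mem_singleton] at hx hy
    exact absurd (hx.trans hy.symm) hxy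
  | @cons v w c h q ih =>
    rw [support_cons, List.mem_cons] at hx hy
    by_cases hxv : x = v
    · subst hxv
      exact ⟨x, w, nil, h, q, rfl, .inl ⟨start_mem_support _, hy.resolve_left hxy.symm⟩⟩
    by_cases hyv : y = v
    · subst hyv
      exact ⟨y, w, nil, h, q, rfl, .inr ⟨start_mem_support _, hx.resolve_left hxy⟩⟩
    obtain ⟨s, t, q₁, h', q₂, rfl, hsep⟩ := ih (hx.resolve_left hxv) (hy.resolve_left hyv)
    refine ⟨s, t, cons h q₁, h', q₂, rfl, ?_⟩
    simpa only [support_cons, List.mem_cons, hxv, hyv, false_or] using hsep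

lemma mem_support_append_cons_iff {b s t c v : V} {p₁ : G.Walk b s} {h : G.Adj s t}
    {p₂ : G.Walk t c} : v ∈ (p₁.append (cons h p₂)).support ↔ v ∈ p₁.support ∨ v ∈ p₂.support := by
  rw [support_append, support_cons, List.tail_cons, List.mem_append]

lemma IsPath.disjoint_support_of_append_cons {b s t c : V} {p₁ : G.Walk b s} {h : G.Adj s t}
    {p₂ : G.Walk t c} (hp : (p₁.append (cons h p₂)).IsPath) :
    Disjoint {v | v ∈ p₁.support} {v | v ∈ p₂.support} := by
  have hnodup := hp.support_nodup
  rw [support_append, support_cons, List.tail_cons] at hnodup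
  exact Set.disjoint_left.mpr fun _ h₁ h₂ => List.disjoint_of_nodup_append hnodup h₁ h₂

end SimpleGraph.Walk

namespace ThreeConnected

variable {V : Type*} {G : SimpleGraph V}

lemma induce_compl_pair_connected (hG : ThreeConnected G) (s t : V) :
    (G.induce {s, t}ᶜ).Connected :=
  hG _ ((Set.ncard_insert_le _ _).trans (by simp))

lemma exists_adj_componentAvoiding (hG : ThreeConnected G) {P : Set V} {u a q d : V}
    (ha : a ∉ insert u P) (hq : q ∈ P) (hd : d ∈ P) (hdq : d ≠ q) (hdu : d ≠ u) :
    ∃ y ∈ P, y ≠ q ∧ ∃ x ∈ G.componentAvoiding (insert u P) a, G.Adj x y := by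
  by_contra! hA
  have hclosed : ∀ x ∈ G.componentAvoiding (insert u P) a, ∀ y, G.Adj x y →
      y ∈ G.componentAvoiding (insert u P) a ∨ y ∈ ({u, q} : Set V) := by
    intro x hx y hxy
    refine (mem_componentAvoiding_or_mem_of_adj hx hxy).imp_right fun hy => ?_
    rcases hy with rfl | hyP
    · exact .inl rfl
    · exact .inr (by_contra fun hyq => hA y hyP hyq x hx hxy)
  have hau : a ≠ u := fun h => ha (.inl h)
  have haq : a ≠ q := fun h => ha (.inr (h ▸ hq))
  have hsub := compl_subset_of_induce_compl_connected (hG.induce_compl_pair_connected u q)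
    (mem_componentAvoiding_self ha) (by simp [hau, haq]) hclosed
  exact Set.disjoint_left.mp disjoint_componentAvoiding (hsub (by simp [hdq, hdu])) (.inr hd)

end ThreeConnected

section CompleteMinor

variable {V : Type*} {G : SimpleGraph V}

lemma isCompleteMinorWitness_of_forall_lt {n : ℕ} {B : Fin n → Set V}
    (hconn : ∀ i, (G.induce (B i)).Connected) (hdisj : ∀ i j, i < j → Disjoint (B i) (B j))
    (hadj : ∀ i j, i < j → ∃ x ∈ B i, ∃ y ∈ B j, G.Adj x y) : IsCompleteMinorWitness G n B := by
  refine ⟨fun i => Set.nonempty_coe_sort.mp (hconn i).nonempty, hconn, fun i j hij => ?_,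
    fun i j hij => ?_⟩
  · rcases hij.lt_or_gt with h | h
    exacts [hdisj i j h, (hdisj j i h).symm]
  · rcases hij.lt_or_gt with h | h
    · exact hadj i j h
    · obtain ⟨x, hx, y, hy, hxy⟩ := hadj j i h
      exact ⟨y, hy, x, hx, hxy.symm⟩

lemma exists_k4_of_path_and_bridge {u a b c x y : V} (hua : G.Adj u a) (hub : G.Adj u b)
    (huc : G.Adj u c) {Q : G.Walk b c} (hQ : Q.IsPath) {A : Set V} (haA : a ∈ A)
    (hA : (G.induce A).Connected) (hAQ : Disjoint A (insert u {v | v ∈ Q.support}))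
    (huQ : u ∉ Q.support) (hx : x ∈ Q.support) (hy : y ∈ Q.support) (hxy : x ≠ y)
    (hxA : ∃ w ∈ A, G.Adj w x) (hyA : ∃ w ∈ A, G.Adj w y) :
    ∃ B : Fin 4 → Set V, IsCompleteMinorWitness G 4 B ∧ u ∈ B 0 ∧ a ∈ B 1 ∧ b ∈ B 2 ∧ c ∈ B 3 := by
  obtain ⟨s, t, p₁, hst, p₂, rfl, hsep⟩ := Q.exists_eq_append_cons_separating hx hy hxy
  have hp₁ : ∀ v ∈ p₁.support, v ∈ (p₁.append (.cons hst p₂)).support := fun v hv =>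
    Walk.mem_support_append_cons_iff.mpr (.inl hv)
  have hp₂ : ∀ v ∈ p₂.support, v ∈ (p₁.append (.cons hst p₂)).support := fun v hv =>
    Walk.mem_support_append_cons_iff.mpr (.inr hv)
  have hA₁ : Disjoint A {v | v ∈ p₁.support} :=
    hAQ.mono_right fun v hv => .inr (hp₁ v hv)
  have hA₂ : Disjoint A {v | v ∈ p₂.support} :=
    hAQ.mono_right fun v hv => .inr (hp₂ v hv)
  have hattach : ∀ S : Set V, x ∈ S ∨ y ∈ S → ∃ w ∈ A, ∃ v ∈ S, G.Adj w v := by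
    rintro S (hxS | hyS)
    exacts [hxA.imp fun w ⟨hw, h⟩ => ⟨hw, x, hxS, h⟩, hyA.imp fun w ⟨hw, h⟩ => ⟨hw, y, hyS, h⟩]
  refine ⟨![{u}, A, {v | v ∈ p₁.support}, {v | v ∈ p₂.support}],
    isCompleteMinorWitness_of_forall_lt ?_ ?_ ?_, rfl, haA, p₁.start_mem_support,
    p₂.end_mem_support⟩
  · intro i
    fin_cases i
    exacts [induce_singleton_connected u, hA, p₁.connected_induce_support,
      p₂.connected_induce_support]
  · intro i j hij
    fin_cases i <;> fin_cases j <;> try exact absurd hij (by decide)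
    exacts [Set.disjoint_singleton_left.mpr fun h => hAQ.notMem_of_mem_left h (.inl rfl),
      Set.disjoint_singleton_left.mpr fun h => huQ (hp₁ u h),
      Set.disjoint_singleton_left.mpr fun h => huQ (hp₂ u h),
      hA₁, hA₂, hQ.disjoint_support_of_append_cons]
  · intro i j hij
    fin_cases i <;> fin_cases j <;> try exact absurd hij (by decide)
    exacts [⟨u, rfl, a, haA, hua⟩, ⟨u, rfl, b, p₁.start_mem_support, hub⟩,
      ⟨u, rfl, c, p₂.end_mem_support, huc⟩, hattach _ (hsep.imp And.left And.left),
      hattach _ (hsep.imp And.right And.right).symm,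
      ⟨s, p₁.end_mem_support, t, p₂.start_mem_support, hst⟩]

end CompleteMinor

/-- In a 3-connected graph, if a vertex `u ∈ U` has at least 3 neighbors in `U`,
then `G` contains a `K_4` minor each of whose branch sets meets `U`. -/
theorem k4_minor_on_U_of_three_neighbors {V : Type*} (G : SimpleGraph V)
    (h3 : ThreeConnected G) (U : Set V) (u : V) (hu : u ∈ U)
    (hdeg : 3 ≤ (G.neighborSet u ∩ U).ncard) :
    ∃ B : Fin 4 → Set V, IsCompleteMinorWitness G 4 B ∧
      ∀ i, (B i ∩ U).Nonempty := by
  obtain ⟨T, hTsub, hT⟩ := Set.exists_subset_card_eq hdeg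
  obtain ⟨a, b, c, hab, hac, hbc, rfl⟩ := Set.ncard_eq_three.mp hT
  simp only [Set.insert_subset_iff, Set.singleton_subset_iff, Set.mem_inter_iff,
    mem_neighborSet] at hTsub
  obtain ⟨⟨hua, haU⟩, ⟨hub, hbU⟩, ⟨huc, hcU⟩⟩ := hTsub
  obtain ⟨Q, hQ, hQua⟩ := exists_isPath_of_induce_connected
    (h3.induce_compl_pair_connected u a) (x := b) (y := c) (by simp [hab.symm, hub.ne'])
    (by simp [hac.symm, huc.ne'])
  have huQ : u ∉ Q.support := fun h => hQua u h (.inl rfl)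
  have haQ : a ∉ insert u {v | v ∈ Q.support} := by
    rintro (rfl | h)
    exacts [hua.ne rfl, hQua a h (.inr rfl)]
  obtain ⟨x, hx, hxb, hxA⟩ := h3.exists_adj_componentAvoiding haQ Q.start_mem_support
    Q.end_mem_support hbc.symm fun h => huQ (h ▸ Q.end_mem_support)
  obtain ⟨y, hy, hyx, hyA⟩ := h3.exists_adj_componentAvoiding haQ hx Q.start_mem_support
    hxb.symm fun h => huQ (h ▸ Q.start_mem_support)
  obtain ⟨B, hB, hu0, ha1, hb2, hc3⟩ := exists_k4_of_path_and_bridge hua hub huc hQ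
    (mem_componentAvoiding_self haQ)
    (induce_componentAvoiding_connected haQ)
    disjoint_componentAvoiding huQ hx hy hyx.symm hxA hyA
  refine ⟨B, hB, fun i => ?_⟩
  fin_cases i
  exacts [⟨u, hu0, hu⟩, ⟨a, ha1, haU⟩, ⟨b, hb2, hbU⟩, ⟨c, hc3, hcU⟩]
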